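/- Let V be a braided monoidal category with unit object I and let (A,v,η,ε) be an augmented lax tricocycloid in V. Then the following data define a left skew-monoidal structure on V with unit object I: tensor product X∗Y = A⊗X⊗Y; associativity constraint α_{X,Y,Z} = (1_A⊗c_{A,X}⊗1_Y⊗1_Z)∘(v⊗1_X⊗1_Y⊗1_Z) : A⊗(A⊗X⊗Y)⊗Z → A⊗X⊗(A⊗Y⊗Z); left unit constraint λ_X = ε⊗1_X : A⊗X → X; right unit constraint ρ_X = η⊗1_X : X → A⊗X. That is, all five left skew-monoidal axioms hold for (∗, I, α, λ, ρ). -/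

import Mathlib

/-!
Up to associators `(X ∗ Y) ∗ Z = A ⊗ A ⊗ X ⊗ Y ⊗ Z` and `α_{X,Y,Z} = (1 ⊗ c_{A,X} ⊗ 1)(v ⊗ 1)`.
Using naturality of the braiding, the interchange law and the hexagon identities, both sides
of the pentagon become the braiding `(1 ⊗ c_{A,X} ⊗ 1)(1 ⊗ 1 ⊗ c_{A,X⊗Y} ⊗ 1)` preceded by one
side of the 3-cocycle condition tensored with `1_{X⊗Y⊗Z⊗W}`. Each unit axiom is, after rewriting
the braidings with `I` as unitors, one of the augmentation identities tensored with identities.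
-/

open CategoryTheory MonoidalCategory

set_option maxHeartbeats 1000000

variable {V : Type*} [Category V] [MonoidalCategory V] [BraidedCategory V]

/-- The associativity constraint `α_{X,Y,Z} : (X∗Y)∗Z ⟶ X∗(Y∗Z)` of the warped tensor
`X ∗ Y = A ⊗ (X ⊗ Y)`, given by `(1_A ⊗ c_{A,X} ⊗ 1_Y ⊗ 1_Z) ∘ (v ⊗ 1_X ⊗ 1_Y ⊗ 1_Z)`,
written with explicit coherence isomorphisms. -/
def skewAssoc (A : V) (v : A ⊗ A ⟶ A ⊗ A) (X Y Z : V) :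
    A ⊗ ((A ⊗ (X ⊗ Y)) ⊗ Z) ⟶ A ⊗ (X ⊗ (A ⊗ (Y ⊗ Z))) :=
  (A ◁ (α_ A (X ⊗ Y) Z).hom) ≫ (α_ A A ((X ⊗ Y) ⊗ Z)).inv ≫ (v ▷ ((X ⊗ Y) ⊗ Z)) ≫
    (α_ A A ((X ⊗ Y) ⊗ Z)).hom ≫
    (A ◁ ((α_ A (X ⊗ Y) Z).inv ≫
      (((α_ A X Y).inv ≫ ((β_ A X).hom ▷ Y) ≫ (α_ X A Y).hom) ▷ Z) ≫
      (α_ X (A ⊗ Y) Z).hom ≫ (X ◁ (α_ A Y Z).hom)))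

/-- The left unit constraint `λ_X = ε ⊗ 1_X : I ∗ X = A ⊗ (I ⊗ X) ⟶ X`. -/
def skewLambda (A : V) (ε : A ⟶ 𝟙_ V) (X : V) : A ⊗ (𝟙_ V ⊗ X) ⟶ X :=
  (A ◁ (λ_ X).hom) ≫ (ε ▷ X) ≫ (λ_ X).hom

/-- The right unit constraint `ρ_X = η ⊗ 1_X : X ⟶ X ∗ I = A ⊗ (X ⊗ I)`. -/
def skewRho (A : V) (η : 𝟙_ V ⟶ A) (X : V) : X ⟶ A ⊗ (X ⊗ 𝟙_ V) :=
  (λ_ X).inv ≫ (η ▷ X) ≫ (A ◁ (ρ_ X).inv)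

open BraidedCategory

section

variable {A : V} {v : A ⊗ A ⟶ A ⊗ A} {η : 𝟙_ V ⟶ A} {ε : A ⟶ 𝟙_ V}

lemma skewAssoc_eq (X Y Z : V) :
    skewAssoc A v X Y Z =
      𝟙 _ ⊗≫ (v ▷ (X ⊗ (Y ⊗ Z))) ⊗≫ (A ◁ ((β_ A X).hom ▷ (Y ⊗ Z))) ⊗≫ 𝟙 _ := by
  simp only [skewAssoc]; monoidal

lemma whiskerLeft_skewAssoc_whiskerRight_comp_skewAssoc (X Y Z W : V) :
    (A ◁ (skewAssoc A v X Y Z ▷ W)) ≫ skewAssoc A v X (A ⊗ (Y ⊗ Z)) W =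
      𝟙 _ ⊗≫ (A ◁ (v ▷ (X ⊗ (Y ⊗ (Z ⊗ W))))) ⊗≫ (v ▷ ((A ⊗ X) ⊗ (Y ⊗ (Z ⊗ W)))) ⊗≫
        (A ◁ ((β_ (A ⊗ A) X).hom ▷ ((Y ⊗ Z) ⊗ W))) ⊗≫ 𝟙 _ := by
  calc _ = 𝟙 _ ⊗≫ (A ◁ (v ▷ (X ⊗ (Y ⊗ (Z ⊗ W))))) ⊗≫
          (((A ⊗ A) ◁ ((β_ A X).hom ▷ (Y ⊗ (Z ⊗ W)))) ≫
            (v ▷ ((X ⊗ A) ⊗ (Y ⊗ (Z ⊗ W))))) ⊗≫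
          (A ◁ ((β_ A X).hom ▷ ((A ⊗ (Y ⊗ Z)) ⊗ W))) ⊗≫ 𝟙 _ := by
        rw [skewAssoc_eq, skewAssoc_eq]; monoidal
    _ = _ := by rw [whisker_exchange, braiding_tensor_left_hom]; monoidal

lemma skewAssoc_pentagon_lhs (X Y Z W : V) :
    (A ◁ (skewAssoc A v X Y Z ▷ W)) ≫ skewAssoc A v X (A ⊗ (Y ⊗ Z)) W ≫
        (A ◁ (X ◁ skewAssoc A v Y Z W)) =
      𝟙 _ ⊗≫ (((α_ A A A).hom ≫ (A ◁ v) ≫ (α_ A A A).inv ≫ (v ▷ A) ≫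
          (α_ A A A).hom ≫ (A ◁ v) ≫ (α_ A A A).inv) ▷ ((X ⊗ Y) ⊗ (Z ⊗ W))) ⊗≫
        ((A ⊗ A) ◁ ((β_ A (X ⊗ Y)).hom ▷ (Z ⊗ W))) ⊗≫
        (A ◁ ((β_ A X).hom ▷ (Y ⊗ (A ⊗ (Z ⊗ W))))) ⊗≫ 𝟙 _ := by
  rw [← Category.assoc, whiskerLeft_skewAssoc_whiskerRight_comp_skewAssoc, skewAssoc_eq]
  calc _ = 𝟙 _ ⊗≫ (A ◁ (v ▷ (X ⊗ (Y ⊗ (Z ⊗ W))))) ⊗≫ (v ▷ ((A ⊗ X) ⊗ (Y ⊗ (Z ⊗ W)))) ⊗≫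
          (A ◁ (((β_ (A ⊗ A) X).hom ≫ (X ◁ v)) ▷ ((Y ⊗ Z) ⊗ W))) ⊗≫
          (A ◁ (X ◁ (A ◁ ((β_ A Y).hom ▷ (Z ⊗ W))))) ⊗≫ 𝟙 _ := by monoidal
    _ = 𝟙 _ ⊗≫ (((α_ A A A).hom ≫ (A ◁ v) ≫ (α_ A A A).inv ≫ (v ▷ A) ≫
          (α_ A A A).hom ≫ (A ◁ v) ≫ (α_ A A A).inv) ▷ ((X ⊗ Y) ⊗ (Z ⊗ W))) ⊗≫
          ((A ⊗ A) ◁ ((β_ A X).hom ▷ (Y ⊗ (Z ⊗ W)))) ⊗≫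
          (A ◁ (((β_ A X).hom ▷ ((A ⊗ Y) ⊗ (Z ⊗ W))) ≫
            ((X ⊗ A) ◁ ((β_ A Y).hom ▷ (Z ⊗ W))))) ⊗≫ 𝟙 _ := by
        rw [← braiding_naturality_left, braiding_tensor_left_hom]; monoidal
    _ = _ := by rw [← whisker_exchange, braiding_tensor_right_hom]; monoidal

lemma skewAssoc_pentagon_rhs (X Y Z W : V) :
    skewAssoc A v (A ⊗ (X ⊗ Y)) Z W ≫ skewAssoc A v X Y (A ⊗ (Z ⊗ W)) =
      𝟙 _ ⊗≫ (((v ▷ A) ≫ (α_ A A A).hom ≫ (A ◁ (β_ A A).hom) ≫ (α_ A A A).inv ≫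
          (v ▷ A)) ▷ ((X ⊗ Y) ⊗ (Z ⊗ W))) ⊗≫
        ((A ⊗ A) ◁ ((β_ A (X ⊗ Y)).hom ▷ (Z ⊗ W))) ⊗≫
        (A ◁ ((β_ A X).hom ▷ (Y ⊗ (A ⊗ (Z ⊗ W))))) ⊗≫ 𝟙 _ := by
  calc _ = 𝟙 _ ⊗≫ (v ▷ ((A ⊗ (X ⊗ Y)) ⊗ (Z ⊗ W))) ⊗≫
          (A ◁ ((β_ A A).hom ▷ ((X ⊗ Y) ⊗ (Z ⊗ W)))) ⊗≫
          (((A ⊗ A) ◁ ((β_ A (X ⊗ Y)).hom ▷ (Z ⊗ W))) ≫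
            (v ▷ (((X ⊗ Y) ⊗ A) ⊗ (Z ⊗ W)))) ⊗≫
          (A ◁ ((β_ A X).hom ▷ (Y ⊗ (A ⊗ (Z ⊗ W))))) ⊗≫ 𝟙 _ := by
        rw [skewAssoc_eq, skewAssoc_eq, braiding_tensor_right_hom A A (X ⊗ Y)]; monoidal
    _ = _ := by rw [whisker_exchange]; monoidal

lemma skewAssoc_pentagon
    (hv : (v ▷ A) ≫ (α_ A A A).hom ≫ (A ◁ (β_ A A).hom) ≫ (α_ A A A).inv ≫ (v ▷ A) =
      (α_ A A A).hom ≫ (A ◁ v) ≫ (α_ A A A).inv ≫ (v ▷ A) ≫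
        (α_ A A A).hom ≫ (A ◁ v) ≫ (α_ A A A).inv) (X Y Z W : V) :
    (A ◁ (skewAssoc A v X Y Z ▷ W)) ≫ skewAssoc A v X (A ⊗ (Y ⊗ Z)) W ≫
        (A ◁ (X ◁ skewAssoc A v Y Z W)) =
      skewAssoc A v (A ⊗ (X ⊗ Y)) Z W ≫ skewAssoc A v X Y (A ⊗ (Z ⊗ W)) := by
  rw [skewAssoc_pentagon_lhs, skewAssoc_pentagon_rhs, hv]

lemma skewAssoc_triangle
    (h : (ρ_ A).inv ≫ (A ◁ η) ≫ v ≫ (A ◁ ε) ≫ (ρ_ A).hom = 𝟙 A) (X Y : V) :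
    (A ◁ (skewRho A η X ▷ Y)) ≫ skewAssoc A v X (𝟙_ V) Y ≫ (A ◁ (X ◁ skewLambda A ε Y)) =
      𝟙 (A ⊗ (X ⊗ Y)) :=
  calc _ = 𝟙 _ ⊗≫ ((A ◁ η) ▷ (X ⊗ Y)) ⊗≫ (v ▷ (X ⊗ Y)) ⊗≫
          (A ◁ (((β_ A X).hom ≫ (X ◁ ε)) ▷ Y)) ⊗≫ 𝟙 _ := by
        rw [skewRho, skewAssoc_eq, skewLambda]; monoidal
    _ = 𝟙 _ ⊗≫ (((ρ_ A).inv ≫ (A ◁ η) ≫ v ≫ (A ◁ ε) ≫ (ρ_ A).hom) ▷ (X ⊗ Y)) ⊗≫ 𝟙 _ := by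
        rw [← braiding_naturality_left, braiding_tensorUnit_left]; monoidal
    _ = _ := by rw [h]; monoidal

lemma skewAssoc_comp_skewLambda
    (h : v ≫ (ε ▷ A) ≫ (λ_ A).hom = (A ◁ ε) ≫ (ρ_ A).hom) (X Y : V) :
    skewAssoc A v (𝟙_ V) X Y ≫ skewLambda A ε (A ⊗ (X ⊗ Y)) = A ◁ (skewLambda A ε X ▷ Y) :=
  calc _ = 𝟙 _ ⊗≫ ((v ≫ (ε ▷ A) ≫ (λ_ A).hom) ▷ (X ⊗ Y)) ⊗≫ 𝟙 _ := by
        rw [skewAssoc_eq, skewLambda, braiding_tensorUnit_right]; monoidal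
    _ = _ := by rw [h, skewLambda]; monoidal

lemma skewRho_comp_skewAssoc
    (h : (λ_ A).inv ≫ (η ▷ A) ≫ v = (ρ_ A).inv ≫ (A ◁ η)) (X Y : V) :
    skewRho A η (A ⊗ (X ⊗ Y)) ≫ skewAssoc A v X Y (𝟙_ V) = A ◁ (X ◁ skewRho A η Y) :=
  calc _ = 𝟙 _ ⊗≫ (((λ_ A).inv ≫ (η ▷ A) ≫ v) ▷ (X ⊗ Y)) ⊗≫
          (A ◁ ((β_ A X).hom ▷ Y)) ⊗≫ 𝟙 _ := by
        rw [skewRho, skewAssoc_eq]; monoidal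
    _ = 𝟙 _ ⊗≫ (A ◁ ((η ▷ X ≫ (β_ A X).hom) ▷ Y)) ⊗≫ 𝟙 _ := by rw [h]; monoidal
    _ = _ := by rw [braiding_naturality_left, braiding_tensorUnit_left, skewRho]; monoidal

end

lemma skewRho_comp_skewLambda {C : Type*} [Category C] [MonoidalCategory C] {A : C}
    {η : 𝟙_ C ⟶ A} {ε : A ⟶ 𝟙_ C} (h : η ≫ ε = 𝟙 (𝟙_ C)) :
    skewRho A η (𝟙_ C) ≫ skewLambda A ε (𝟙_ C) = 𝟙 (𝟙_ C) :=
  calc _ = 𝟙 _ ⊗≫ ((η ≫ ε) ▷ 𝟙_ C) ⊗≫ 𝟙 _ := by rw [skewRho, skewLambda]; monoidal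
    _ = _ := by rw [h]; monoidal

/-- An augmented lax tricocycloid `(A, v, η, ε)` in a braided monoidal
category `V` yields a left skew-monoidal structure on `V` with tensor `X ∗ Y = A ⊗ (X ⊗ Y)`,
unit `I`, associativity `α = (1⊗c_{A,X}⊗1⊗1)(v⊗1⊗1⊗1)`, left unit `ε ⊗ 1` and right unit
`η ⊗ 1`: the five skew-monoidal axioms hold. -/
theorem augmented_tricocycloid_skew_monoidal (A : V) (v : A ⊗ A ⟶ A ⊗ A)
    (η : 𝟙_ V ⟶ A) (ε : A ⟶ 𝟙_ V)
    (hv : (v ▷ A) ≫ (α_ A A A).hom ≫ (A ◁ (β_ A A).hom) ≫ (α_ A A A).inv ≫ (v ▷ A) =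
      (α_ A A A).hom ≫ (A ◁ v) ≫ (α_ A A A).inv ≫ (v ▷ A) ≫
        (α_ A A A).hom ≫ (A ◁ v) ≫ (α_ A A A).inv)
    (haug1 : (ρ_ A).inv ≫ (A ◁ η) ≫ v ≫ (A ◁ ε) ≫ (ρ_ A).hom = 𝟙 A)
    (haug2 : v ≫ (ε ▷ A) ≫ (λ_ A).hom = (A ◁ ε) ≫ (ρ_ A).hom)
    (haug3 : (λ_ A).inv ≫ (η ▷ A) ≫ v = (ρ_ A).inv ≫ (A ◁ η))
    (haug4 : η ≫ ε = 𝟙 (𝟙_ V)) :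
    -- (1) pentagon
    (∀ X Y Z W : V,
      (A ◁ (skewAssoc A v X Y Z ▷ W)) ≫ skewAssoc A v X (A ⊗ (Y ⊗ Z)) W ≫
          (A ◁ (X ◁ skewAssoc A v Y Z W)) =
        skewAssoc A v (A ⊗ (X ⊗ Y)) Z W ≫ skewAssoc A v X Y (A ⊗ (Z ⊗ W))) ∧
    -- (2) (1_X ∗ λ_Y) ∘ α_{X,I,Y} ∘ (ρ_X ∗ 1_Y) = 1
    (∀ X Y : V,
      (A ◁ (skewRho A η X ▷ Y)) ≫ skewAssoc A v X (𝟙_ V) Y ≫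
          (A ◁ (X ◁ skewLambda A ε Y)) = 𝟙 (A ⊗ (X ⊗ Y))) ∧
    -- (3) λ_{X∗Y} ∘ α_{I,X,Y} = λ_X ∗ 1_Y
    (∀ X Y : V,
      skewAssoc A v (𝟙_ V) X Y ≫ skewLambda A ε (A ⊗ (X ⊗ Y)) =
        A ◁ (skewLambda A ε X ▷ Y)) ∧
    -- (4) α_{X,Y,I} ∘ ρ_{X∗Y} = 1_X ∗ ρ_Y
    (∀ X Y : V,
      skewRho A η (A ⊗ (X ⊗ Y)) ≫ skewAssoc A v X Y (𝟙_ V) =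
        A ◁ (X ◁ skewRho A η Y)) ∧
    -- (5) λ_I ∘ ρ_I = 1_I
    (skewRho A η (𝟙_ V) ≫ skewLambda A ε (𝟙_ V) = 𝟙 (𝟙_ V)) :=
  ⟨skewAssoc_pentagon hv, skewAssoc_triangle haug1, skewAssoc_comp_skewLambda haug2,
    skewRho_comp_skewAssoc haug3, skewRho_comp_skewLambda haug4⟩
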